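/- Let λ ∈ (0,1), α ∈ (0, 1-λ), and f ∈ C^λ([0,1]). Define the Riemann–Liouville fractional integral (I^α f)(t) = (1/Γ(α)) ∫₀ᵗ f(s)(t-s)^{α-1} ds. Then there exists ψ ∈ C^{λ+α}([0,1]) with |ψ(t)| ≤ C t^{λ+α} for some constant C > 0 depending only on λ, α and the Hölder seminorm of f, such that (I^α f)(t) = f(0) t^α / Γ(1+α) + ψ(t) for all t ∈ [0,1]. -/

import Mathlib

open Set MeasureTheory

/-- The Riemann–Liouville fractional integral of order `a`:
`(I^a f)(t) = (1/Γ(a)) ∫₀ᵗ f(s) (t-s)^(a-1) ds`. -/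
noncomputable def rlInt (a : ℝ) (f : ℝ → ℝ) (t : ℝ) : ℝ :=
  (1 / Real.Gamma a) * ∫ s in (0:ℝ)..t, f s * (t - s) ^ (a - 1)


lemma aux_bern {x q : ℝ} (hx : 0 ≤ x) (hq0 : 0 ≤ q) (hq1 : q ≤ 1) :
    1 - q * x ≤ (1 + x) ^ (-q) := by
  rcases le_or_gt 1 (q * x) with h | h
  · have : (0:ℝ) < (1 + x) ^ (-q) := Real.rpow_pos_of_pos (by linarith) _
    linarith
  · have hP : (0:ℝ) < (1 + x) ^ q := Real.rpow_pos_of_pos (by linarith) _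
    have h1 : (1 + x) ^ q ≤ 1 + q * x :=
      rpow_one_add_le_one_add_mul_self (by linarith) hq0 hq1
    rw [Real.rpow_neg (by linarith)]
    nlinarith [mul_inv_cancel₀ hP.ne', mul_le_mul_of_nonneg_left h1 (by linarith : (0:ℝ) ≤ 1 - q*x),
      inv_pos.mpr hP, sq_nonneg (q*x)]

lemma aux_mvt {a v δ : ℝ} (ha0 : 0 < a) (ha1 : a < 1) (hv : 0 < v) (hδ : 0 ≤ δ) :
    v ^ (a-1) - (v+δ) ^ (a-1) ≤ (1-a) * δ * v ^ (a-2) := by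
  have hx : 0 ≤ δ / v := by positivity
  have hb := aux_bern hx (by linarith : (0:ℝ) ≤ 1 - a) (by linarith)
  have he : (v + δ) ^ (a-1) = v ^ (a-1) * (1 + δ/v) ^ (a-1) := by
    rw [← Real.mul_rpow hv.le (by positivity)]
    congr 1
    field_simp
  have hneg : -(1 - a) = a - 1 := by ring
  rw [hneg] at hb
  have hvp : (0:ℝ) < v ^ (a-1) := Real.rpow_pos_of_pos hv _
  have h2 : v ^ (a-1) * (1 - (1-a) * (δ/v)) ≤ (v+δ) ^ (a-1) := by
    rw [he]
    exact mul_le_mul_of_nonneg_left hb hvp.le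
  have h3 : v ^ (a-1) * ((1-a) * (δ/v)) = (1-a) * δ * v ^ (a-2) := by
    have : v ^ (a-1) / v = v ^ (a-2) := by
      rw [← Real.rpow_sub_one hv.ne']
      congr 1; ring
    rw [← this]
    field_simp
  nlinarith [h2, h3]


set_option maxHeartbeats 2000000 in
/-- For λ ∈ (0,1), α ∈ (0,1-λ) and f λ-Hölder on [0,1], there is ψ ∈ C^{λ+α}([0,1]) with
`|ψ(t)| ≤ C t^{λ+α}` such that `(I^α f)(t) = f(0) t^α / Γ(1+α) + ψ(t)` on [0,1]. -/
theorem stmt1 (l a : ℝ) (hl : l ∈ Ioo (0:ℝ) 1) (ha : a ∈ Ioo (0:ℝ) (1 - l))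
    (f : ℝ → ℝ) (K : ℝ)
    (hf : ∀ t ∈ Icc (0:ℝ) 1, ∀ s ∈ Icc (0:ℝ) 1, |f t - f s| ≤ K * |t - s| ^ l) :
    ∃ C > 0, ∃ ψ : ℝ → ℝ,
      (∃ K' : ℝ, ∀ t ∈ Icc (0:ℝ) 1, ∀ s ∈ Icc (0:ℝ) 1,
          |ψ t - ψ s| ≤ K' * |t - s| ^ (l + a)) ∧
      (∀ t ∈ Icc (0:ℝ) 1, |ψ t| ≤ C * t ^ (l + a)) ∧
      (∀ t ∈ Icc (0:ℝ) 1, rlInt a f t = f 0 * t ^ a / Real.Gamma (1 + a) + ψ t) := by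
  obtain ⟨hl0, hl1⟩ := hl
  obtain ⟨ha0, ha1⟩ := ha
  have ha1' : a < 1 := by linarith
  have hla1 : l + a < 1 := by linarith
  have hla0 : 0 < l + a := by linarith
  have hΓ : 0 < Real.Gamma a := Real.Gamma_pos_of_pos ha0
  have h01 : (0:ℝ) ∈ Icc (0:ℝ) 1 := by norm_num
  have hK : 0 ≤ K := by
    have h := hf 1 (by norm_num) 0 h01
    have h1 : |(1:ℝ) - 0| ^ l = 1 := by norm_num
    nlinarith [abs_nonneg (f 1 - f 0)]
  -- continuity
  have hfc : ContinuousOn f (Icc 0 1) := by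
    intro x hx
    rw [Metric.continuousWithinAt_iff]
    intro ε hε
    refine ⟨(ε / (K + 1)) ^ (1 / l), Real.rpow_pos_of_pos (by positivity) _, fun {y} hy hdy => ?_⟩
    have h1 : |f y - f x| ≤ K * |y - x| ^ l := hf y hy x hx
    have h2 : |y - x| ^ l < ((ε / (K+1)) ^ (1/l)) ^ l := by
      apply Real.rpow_lt_rpow (abs_nonneg _) ?_ hl0
      rwa [Real.dist_eq] at hdy
    rw [← Real.rpow_mul (by positivity), one_div_mul_cancel hl0.ne', Real.rpow_one] at h2
    have h3 : K * (ε / (K+1)) < ε := by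
      rw [mul_div_assoc', div_lt_iff₀ (by positivity)]
      nlinarith
    rw [Real.dist_eq]
    calc |f y - f x| ≤ K * |y - x| ^ l := h1
      _ ≤ K * (ε / (K+1)) := by
          apply mul_le_mul_of_nonneg_left h2.le hK
      _ < ε := h3
  -- kernel integrability on any interval
  have hker : ∀ t c d : ℝ, IntervalIntegrable (fun u => (t - u) ^ (a-1)) volume c d := by
    intro t c d
    have h := (intervalIntegral.intervalIntegrable_rpow' (show (-1:ℝ) < a - 1 by linarith)
      (a := t - c) (b := t - d)).comp_sub_left t
    simpa using h
  -- kernel evaluation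
  have hker_eval : ∀ t c d : ℝ, (∫ u in c..d, (t - u) ^ (a-1)) = ((t - c) ^ a - (t - d) ^ a) / a := by
    intro t c d
    rw [intervalIntegral.integral_comp_sub_left (fun v => v ^ (a-1)) t]
    rw [integral_rpow (Or.inl (by linarith))]
    norm_num
  -- product integrability
  have hint : ∀ (φ : ℝ → ℝ), ContinuousOn φ (Icc 0 1) → ∀ (t c d : ℝ), c ∈ Icc (0:ℝ) 1 →
      d ∈ Icc (0:ℝ) 1 →
      IntervalIntegrable (fun u => φ u * (t - u) ^ (a-1)) volume c d := by
    intro φ hφ t c d hc hd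
    exact (hker t c d).continuousOn_mul (hφ.mono (uIcc_subset_Icc hc hd))
  have hgc : ContinuousOn (fun u => f u - f 0) (Icc 0 1) := hfc.sub continuousOn_const
  set Γa := Real.Gamma a with hΓa
  set ψ : ℝ → ℝ := fun t => (1/Γa) * ∫ u in (0:ℝ)..t, (f u - f 0) * (t - u) ^ (a-1) with hψ
  have hΓ1 : Real.Gamma (1 + a) = a * Γa := by rw [add_comm, Real.Gamma_add_one ha0.ne']
  -- the equation
  have heq : ∀ t ∈ Icc (0:ℝ) 1, rlInt a f t = f 0 * t ^ a / Real.Gamma (1+a) + ψ t := by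
    intro t ht
    have hker0 : (∫ u in (0:ℝ)..t, (t-u)^(a-1)) = t ^ a / a := by
      rw [hker_eval t 0 t]
      simp [Real.zero_rpow ha0.ne']
    have hsplit : (∫ u in (0:ℝ)..t, f u * (t-u)^(a-1))
        = (∫ u in (0:ℝ)..t, f 0 * (t-u)^(a-1)) + ∫ u in (0:ℝ)..t, (f u - f 0) * (t-u)^(a-1) := by
      rw [← intervalIntegral.integral_add ((hker t 0 t).const_mul _) (hint _ hgc t 0 t h01 ht)]
      congr 1
      funext u
      ring
    rw [rlInt, hsplit, intervalIntegral.integral_const_mul, hker0, hΓ1, hψ]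
    field_simp
    ring
  -- pointwise bound
  have hbound : ∀ t ∈ Icc (0:ℝ) 1, |ψ t| ≤ (K+1)/(a*Γa) * t ^ (l+a) := by
    rintro t ⟨ht0, ht1⟩
    rcases eq_or_lt_of_le ht0 with rfl | ht0'
    · simp [hψ, Real.zero_rpow hla0.ne']
    · have htI : t ∈ Icc (0:ℝ) 1 := ⟨ht0, ht1⟩
      have habs : |∫ u in (0:ℝ)..t, (f u - f 0)*(t-u)^(a-1)|
          ≤ ∫ u in (0:ℝ)..t, K * t ^ l * (t-u)^(a-1) := by
        refine (intervalIntegral.abs_integral_le_integral_abs ht0).trans ?_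
        apply intervalIntegral.integral_mono_on ht0 (hint _ hgc t 0 t h01 htI).abs
          ((hker t 0 t).const_mul _)
        rintro u ⟨hu0, hut⟩
        rw [abs_mul]
        have hker_nn : (0:ℝ) ≤ (t-u)^(a-1) := Real.rpow_nonneg (by linarith) _
        have h1 : |f u - f 0| ≤ K * t ^ l := by
          have h2 := hf u ⟨hu0, hut.trans ht1⟩ 0 h01
          have h3 : |u - 0| ^ l ≤ t ^ l := by
            rw [sub_zero, abs_of_nonneg hu0]
            exact Real.rpow_le_rpow hu0 hut hl0.le
          nlinarith
        rw [abs_of_nonneg hker_nn]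
        exact mul_le_mul_of_nonneg_right h1 hker_nn
      have hval : (∫ u in (0:ℝ)..t, K * t ^ l * (t-u)^(a-1)) = K * t ^ l * (t ^ a / a) := by
        rw [intervalIntegral.integral_const_mul, hker_eval t 0 t]
        simp [Real.zero_rpow ha0.ne']
      calc |ψ t| = (1/Γa) * |∫ u in (0:ℝ)..t, (f u - f 0)*(t-u)^(a-1)| := by
            rw [hψ, abs_mul, abs_of_nonneg (by positivity : (0:ℝ) ≤ 1/Γa)]
        _ ≤ (1/Γa) * (K * t ^ l * (t ^ a / a)) := by
            rw [← hval]
            exact mul_le_mul_of_nonneg_left habs (by positivity)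
        _ = K/(a*Γa) * t ^ (l+a) := by
            rw [Real.rpow_add ht0']
            field_simp
        _ ≤ (K+1)/(a*Γa) * t ^ (l+a) := by
            apply mul_le_mul_of_nonneg_right _ (Real.rpow_nonneg ht0 _)
            gcongr
            linarith
  -- Hölder continuity
  set M0 : ℝ := K*(2/a+1) + (2*K/(l+a) + K*(1-a)/(1-(l+a))) + K/a with hM0def
  have key : ∀ s t : ℝ, s ∈ Icc (0:ℝ) 1 → t ∈ Icc (0:ℝ) 1 → s ≤ t →
      |ψ t - ψ s| ≤ (1/Γa) * M0 * (t-s)^(l+a) := by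
    rintro s t ⟨hs0, hs1⟩ ⟨ht0, ht1⟩ hst
    rcases eq_or_lt_of_le hst with rfl | hst'
    · simp [Real.zero_rpow hla0.ne']
    set δ := t - s with hδdef
    have hδ0 : 0 < δ := by rw [hδdef]; linarith
    have hδ1 : δ ≤ 1 := by rw [hδdef]; linarith
    have hsI : s ∈ Icc (0:ℝ) 1 := ⟨hs0, hs1⟩
    have htI : t ∈ Icc (0:ℝ) 1 := ⟨ht0, ht1⟩
    have hhc : ContinuousOn (fun u => f u - f s) (Icc 0 1) := hfc.sub continuousOn_const
    have e1 : (∫ u in (0:ℝ)..t, (f u - f 0) * (t-u)^(a-1))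
        = (f s - f 0) * (t^a/a)
          + ((∫ u in (0:ℝ)..s, (f u - f s) * (t-u)^(a-1))
             + ∫ u in s..t, (f u - f s) * (t-u)^(a-1)) := by
      calc (∫ u in (0:ℝ)..t, (f u - f 0) * (t-u)^(a-1))
          = ∫ u in (0:ℝ)..t, ((f s - f 0) * (t-u)^(a-1) + (f u - f s) * (t-u)^(a-1)) := by
            congr 1; funext u; ring
        _ = (∫ u in (0:ℝ)..t, (f s - f 0) * (t-u)^(a-1))
            + ∫ u in (0:ℝ)..t, (f u - f s) * (t-u)^(a-1) :=
            intervalIntegral.integral_add ((hker t 0 t).const_mul _) (hint _ hhc t 0 t h01 htI)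
        _ = _ := by
            rw [intervalIntegral.integral_const_mul, hker_eval t 0 t,
              ← intervalIntegral.integral_add_adjacent_intervals (hint _ hhc t 0 s h01 hsI)
                (hint _ hhc t s t hsI htI)]
            simp [Real.zero_rpow ha0.ne']
    have e2 : (∫ u in (0:ℝ)..s, (f u - f 0) * (s-u)^(a-1))
        = (f s - f 0) * (s^a/a) + ∫ u in (0:ℝ)..s, (f u - f s) * (s-u)^(a-1) := by
      calc (∫ u in (0:ℝ)..s, (f u - f 0) * (s-u)^(a-1))
          = ∫ u in (0:ℝ)..s, ((f s - f 0) * (s-u)^(a-1) + (f u - f s) * (s-u)^(a-1)) := by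
            congr 1; funext u; ring
        _ = (∫ u in (0:ℝ)..s, (f s - f 0) * (s-u)^(a-1))
            + ∫ u in (0:ℝ)..s, (f u - f s) * (s-u)^(a-1) :=
            intervalIntegral.integral_add ((hker s 0 s).const_mul _) (hint _ hhc s 0 s h01 hsI)
        _ = _ := by
            rw [intervalIntegral.integral_const_mul, hker_eval s 0 s]
            simp [Real.zero_rpow ha0.ne']
    have e3 : (∫ u in (0:ℝ)..s, (f u - f s) * (t-u)^(a-1))
          - (∫ u in (0:ℝ)..s, (f u - f s) * (s-u)^(a-1))
        = ∫ u in (0:ℝ)..s, (f u - f s) * ((t-u)^(a-1) - (s-u)^(a-1)) := by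
      rw [← intervalIntegral.integral_sub (hint _ hhc t 0 s h01 hsI) (hint _ hhc s 0 s h01 hsI)]
      congr 1; funext u; ring
    set TA : ℝ := (f s - f 0) * ((t^a - s^a)/a) with hTAdef
    set TB : ℝ := ∫ u in (0:ℝ)..s, (f u - f s) * ((t-u)^(a-1) - (s-u)^(a-1)) with hTBdef
    set TC : ℝ := ∫ u in s..t, (f u - f s) * (t-u)^(a-1) with hTCdef
    have hrep : ψ t - ψ s = (1/Γa) * (TA + TB + TC) := by
      have hXY : (∫ u in (0:ℝ)..t, (f u - f 0) * (t-u)^(a-1))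
          - (∫ u in (0:ℝ)..s, (f u - f 0) * (s-u)^(a-1)) = TA + TB + TC := by
        rw [e1, e2, ← e3, hTAdef]
        ring
      simp only [hψ]
      rw [← mul_sub, hXY]
    -- bound on TA
    have hcs : |f s - f 0| ≤ K * s ^ l := by
      have h2 := hf s hsI 0 h01
      rwa [sub_zero, abs_of_nonneg hs0] at h2
    have htsa : s ^ a ≤ t ^ a := Real.rpow_le_rpow hs0 hst ha0.le
    have hδla : (0:ℝ) ≤ δ^(l+a) := Real.rpow_nonneg hδ0.le _
    have hTA : |TA| ≤ K*(2/a+1) * δ^(l+a) := by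
      have habsTA : |TA| = |f s - f 0| * ((t^a - s^a)/a) := by
        rw [hTAdef, abs_mul, abs_of_nonneg (div_nonneg (by linarith) ha0.le)]
      rcases le_or_gt s δ with hcase | hcase
      · have ht2 : t ≤ 2*δ := by rw [hδdef]; linarith
        have h1 : t ^ a ≤ 2 * δ ^ a := by
          calc t ^ a ≤ (2*δ) ^ a := Real.rpow_le_rpow ht0 ht2 ha0.le
            _ = 2 ^ a * δ ^ a := Real.mul_rpow (by norm_num) hδ0.le
            _ ≤ 2 * δ ^ a := by
                apply mul_le_mul_of_nonneg_right _ (Real.rpow_nonneg hδ0.le _)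
                calc (2:ℝ) ^ a ≤ 2 ^ (1:ℝ) :=
                      Real.rpow_le_rpow_of_exponent_le one_le_two ha1'.le
                  _ = 2 := Real.rpow_one 2
        have h2 : s ^ l ≤ δ ^ l := Real.rpow_le_rpow hs0 hcase hl0.le
        have hδl : (0:ℝ) ≤ δ ^ l := Real.rpow_nonneg hδ0.le _
        have hca : |f s - f 0| ≤ K * δ ^ l :=
          hcs.trans (mul_le_mul_of_nonneg_left h2 hK)
        have hdiv : (t^a - s^a)/a ≤ (2*δ^a)/a := by
          gcongr
          linarith [Real.rpow_nonneg hs0 a]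
        have h3 : |TA| ≤ (K * δ^l) * ((2*δ^a)/a) := by
          rw [habsTA]
          exact mul_le_mul hca hdiv (div_nonneg (by linarith) ha0.le) (by positivity)
        have h4 : (K * δ^l) * ((2*δ^a)/a) = 2*K/a * δ^(l+a) := by
          rw [Real.rpow_add hδ0]
          field_simp
        have h5 : 2*K/a * δ^(l+a) ≤ K*(2/a+1) * δ^(l+a) := by
          apply mul_le_mul_of_nonneg_right _ hδla
          have h5a : 2*K/a = K*(2/a) := by ring
          rw [h5a]
          exact mul_le_mul_of_nonneg_left (by linarith [(by positivity : (0:ℝ) < 2/a)]) hK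
        calc |TA| ≤ (K * δ^l) * ((2*δ^a)/a) := h3
          _ = 2*K/a * δ^(l+a) := h4
          _ ≤ K*(2/a+1) * δ^(l+a) := h5
      · have hs0' : 0 < s := lt_trans hδ0 hcase
        have hbern : t ^ a ≤ s ^ a + a * δ * s ^ (a-1) := by
          have hts' : t = s * (1 + δ/s) := by
            field_simp
            rw [hδdef]
            ring
          have h4 : (1 + δ/s) ^ a ≤ 1 + a * (δ/s) :=
            rpow_one_add_le_one_add_mul_self
              (by have : (0:ℝ) ≤ δ/s := by positivity
                  linarith) ha0.le ha1'.le
          have h5 : s^a * (1 + a*(δ/s)) = s^a + a*δ*s^(a-1) := by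
            rw [Real.rpow_sub_one hs0'.ne']
            field_simp
          calc t ^ a = s^a * (1 + δ/s)^a := by
                rw [hts', Real.mul_rpow hs0'.le (by positivity)]
            _ ≤ s^a * (1 + a*(δ/s)) :=
                mul_le_mul_of_nonneg_left h4 (Real.rpow_nonneg hs0'.le _)
            _ = s^a + a*δ*s^(a-1) := h5
        have h6 : s ^ l * s^(a-1) = s^(l+a-1) := by
          rw [← Real.rpow_add hs0']
          congr 1
          ring
        have h7 : s^(l+a-1) ≤ δ^(l+a-1) :=
          Real.rpow_le_rpow_of_nonpos hδ0 hcase.le (by linarith)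
        have h8 : δ * δ^(l+a-1) = δ^(l+a) := by
          nth_rewrite 1 [← Real.rpow_one δ]
          rw [← Real.rpow_add hδ0]
          congr 1
          ring
        have hsl : (0:ℝ) ≤ s ^ l := Real.rpow_nonneg hs0 _
        have hsa1 : (0:ℝ) ≤ s ^ (a-1) := Real.rpow_nonneg hs0 _
        have hdiv2 : (t^a - s^a)/a ≤ (a*δ*s^(a-1))/a := by
          gcongr
          linarith [hbern]
        have h9 : |TA| ≤ (K*s^l) * ((a*δ*s^(a-1))/a) := by
          rw [habsTA]
          exact mul_le_mul hcs hdiv2 (div_nonneg (by linarith) ha0.le) (by positivity)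
        have h10 : (K*s^l) * ((a*δ*s^(a-1))/a) = K * δ * s^(l+a-1) := by
          rw [← h6]
          field_simp
        have h11 : K * δ * s^(l+a-1) ≤ K * δ * δ^(l+a-1) :=
          mul_le_mul_of_nonneg_left h7 (by positivity)
        have h12 : K * δ * δ^(l+a-1) = K * δ^(l+a) := by
          rw [← h8]
          ring
        have h13 : K * δ^(l+a) ≤ K*(2/a+1) * δ^(l+a) := by
          apply mul_le_mul_of_nonneg_right _ hδla
          nlinarith [(by positivity : (0:ℝ) < 2/a), hK]
        calc |TA| ≤ (K*s^l) * ((a*δ*s^(a-1))/a) := h9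
          _ = K * δ * s^(l+a-1) := h10
          _ ≤ K * δ * δ^(l+a-1) := h11
          _ = K * δ^(l+a) := h12
          _ ≤ K*(2/a+1) * δ^(l+a) := h13
    -- bound on TC
    have hTC : |TC| ≤ K/a * δ^(l+a) := by
      have h1 : |TC| ≤ ∫ u in s..t, K * δ^l * (t-u)^(a-1) := by
        rw [hTCdef]
        refine (intervalIntegral.abs_integral_le_integral_abs hst).trans ?_
        apply intervalIntegral.integral_mono_on hst (hint _ hhc t s t hsI htI).abs
          ((hker t s t).const_mul _)
        rintro u ⟨hus, hut⟩
        rw [abs_mul, abs_of_nonneg (Real.rpow_nonneg (by linarith) (a-1))]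
        apply mul_le_mul_of_nonneg_right _ (Real.rpow_nonneg (by linarith) _)
        have h2 := hf u ⟨by linarith, by linarith⟩ s hsI
        have h3 : |u - s| ^ l ≤ δ ^ l := by
          rw [abs_of_nonneg (by linarith)]
          apply Real.rpow_le_rpow (by linarith) _ hl0.le
          rw [hδdef]
          linarith
        calc |f u - f s| ≤ K * |u - s| ^ l := h2
          _ ≤ K * δ ^ l := mul_le_mul_of_nonneg_left h3 hK
      have h2 : (∫ u in s..t, K * δ^l * (t-u)^(a-1)) = K * δ^l * (δ^a/a) := by
        rw [intervalIntegral.integral_const_mul, hker_eval t s t, ← hδdef]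
        simp [Real.zero_rpow ha0.ne']
      have h3 : K * δ^l * (δ^a/a) = K/a * δ^(l+a) := by
        rw [Real.rpow_add hδ0]
        field_simp
      calc |TC| ≤ ∫ u in s..t, K * δ^l * (t-u)^(a-1) := h1
        _ = K * δ^l * (δ^a/a) := h2
        _ = K/a * δ^(l+a) := h3
    -- bound on TB
    set G : ℝ → ℝ := fun v => K * (v^l * (v^(a-1) - (v+δ)^(a-1))) with hGdef
    have hGint : ∀ c d : ℝ, IntervalIntegrable G volume c d := by
      intro c d
      apply IntervalIntegrable.const_mul
      apply IntervalIntegrable.continuousOn_mul _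
        ((Real.continuous_rpow_const hl0.le).continuousOn)
      apply IntervalIntegrable.sub
        (intervalIntegral.intervalIntegrable_rpow' (by linarith))
      have h := (intervalIntegral.intervalIntegrable_rpow'
        (show (-1:ℝ) < a-1 by linarith) (a := c + δ) (b := d + δ)).comp_add_right δ
      simpa using h
    have hTB1 : |TB| ≤ ∫ u in (0:ℝ)..s, G (s - u) := by
      rw [hTBdef]
      have hTBrw : (∫ u in (0:ℝ)..s, (f u - f s) * ((t-u)^(a-1) - (s-u)^(a-1)))
          = ∫ u in (0:ℝ)..s,
              ((f u - f s) * (t-u)^(a-1) - (f u - f s) * (s-u)^(a-1)) := by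
        congr 1
        funext u
        ring
      rw [hTBrw]
      refine (intervalIntegral.abs_integral_le_integral_abs hs0).trans ?_
      have hGcomp : IntervalIntegrable (fun u => G (s - u)) volume 0 s := by
        have h := (hGint s 0).comp_sub_left s
        simpa using h
      apply intervalIntegral.integral_mono_on hs0
        ((hint _ hhc t 0 s h01 hsI).sub (hint _ hhc s 0 s h01 hsI)).abs hGcomp
      rintro u ⟨hu0, hus⟩
      have htu : s - u + δ = t - u := by rw [hδdef]; ring
      rcases eq_or_lt_of_le hus with rfl | hus'
      · simp [hGdef, Real.zero_rpow hl0.ne']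
      · have hsu : 0 < s - u := by linarith
        have hk1 : (t-u)^(a-1) ≤ (s-u)^(a-1) :=
          Real.rpow_le_rpow_of_nonpos hsu (by linarith) (by linarith)
        have hhu : |f u - f s| ≤ K * (s-u)^l := by
          have h2 := hf u ⟨hu0, by linarith⟩ s hsI
          rwa [abs_of_nonpos (by linarith : u - s ≤ 0), neg_sub] at h2
        have hexpand : (f u - f s) * (t-u)^(a-1) - (f u - f s) * (s-u)^(a-1)
            = (f u - f s) * ((t-u)^(a-1) - (s-u)^(a-1)) := by ring
        rw [hexpand, abs_mul]
        have habs2 : |(t-u)^(a-1) - (s-u)^(a-1)| = (s-u)^(a-1) - (t-u)^(a-1) := by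
          rw [abs_sub_comm]
          exact abs_of_nonneg (by linarith)
        rw [habs2]
        have hG2 : G (s - u) = K * ((s-u)^l * ((s-u)^(a-1) - (t-u)^(a-1))) := by
          rw [hGdef]
          simp only []
          rw [htu]
        rw [hG2]
        calc |f u - f s| * ((s-u)^(a-1) - (t-u)^(a-1))
            ≤ (K * (s-u)^l) * ((s-u)^(a-1) - (t-u)^(a-1)) :=
              mul_le_mul_of_nonneg_right hhu (by linarith)
          _ = K * ((s-u)^l * ((s-u)^(a-1) - (t-u)^(a-1))) := by ring
    have hsub : (∫ u in (0:ℝ)..s, G (s - u)) = ∫ v in (0:ℝ)..s, G v := by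
      have h := intervalIntegral.integral_comp_sub_left (a := 0) (b := s) G s
      rw [sub_self, sub_zero] at h
      exact h
    have hsmall : ∀ r : ℝ, 0 ≤ r → (∫ v in (0:ℝ)..r, G v) ≤ K * r^(l+a) / (l+a) := by
      intro r hr
      have hmono : (∫ v in (0:ℝ)..r, G v) ≤ ∫ v in (0:ℝ)..r, K * v^(l+a-1) := by
        apply intervalIntegral.integral_mono_on hr (hGint 0 r)
          ((intervalIntegral.intervalIntegrable_rpow'
            (show (-1:ℝ) < l+a-1 by linarith)).const_mul K)
        rintro v ⟨hv0, hvr⟩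
        have h2 : v^l * v^(a-1) = v^(l+a-1) := by
          rw [← Real.rpow_add' hv0 (show l+(a-1) ≠ 0 by intro hc; linarith)]
          congr 1
          ring
        have h1 : v^l * (v^(a-1) - (v+δ)^(a-1)) ≤ v^(l+a-1) := by
          rw [← h2]
          apply mul_le_mul_of_nonneg_left _ (Real.rpow_nonneg hv0 _)
          linarith [Real.rpow_nonneg (show (0:ℝ) ≤ v+δ by linarith) (a-1)]
        rw [hGdef]
        exact mul_le_mul_of_nonneg_left h1 hK
      have heval : (∫ v in (0:ℝ)..r, K * v^(l+a-1)) = K * r^(l+a)/(l+a) := by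
        rw [intervalIntegral.integral_const_mul, integral_rpow (Or.inl (by linarith))]
        have he : l+a-1+1 = l+a := by ring
        rw [he, Real.zero_rpow hla0.ne']
        ring
      linarith [hmono, heval.le, heval.ge]
    have hQ : (∫ v in (0:ℝ)..s, G v)
        ≤ (2*K/(l+a) + K*(1-a)/(1-(l+a))) * δ^(l+a) := by
      have hcoef2 : (0:ℝ) ≤ K*(1-a)/(1-(l+a)) := by
        apply div_nonneg (mul_nonneg hK (by linarith)) (by linarith)
      rcases le_or_gt s δ with hcase | hcase
      · have h1 := hsmall s hs0
        have h2 : s^(l+a) ≤ δ^(l+a) := Real.rpow_le_rpow hs0 hcase hla0.le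
        have h3 : K * s^(l+a)/(l+a) ≤ K * δ^(l+a)/(l+a) := by
          gcongr
        have h4 : K * δ^(l+a)/(l+a) ≤ (2*K/(l+a) + K*(1-a)/(1-(l+a))) * δ^(l+a) := by
          have h5 : K * δ^(l+a)/(l+a) = K/(l+a) * δ^(l+a) := by ring
          rw [h5]
          apply mul_le_mul_of_nonneg_right _ hδla
          have h6 : K/(l+a) ≤ 2*K/(l+a) := by
            gcongr
            linarith
          linarith
        linarith
      · have hsplit2 : (∫ v in (0:ℝ)..s, G v) = (∫ v in (0:ℝ)..δ, G v) + ∫ v in δ..s, G v :=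
          (intervalIntegral.integral_add_adjacent_intervals (hGint 0 δ) (hGint δ s)).symm
        have hpc1 : (∫ v in (0:ℝ)..δ, G v) ≤ K * δ^(l+a)/(l+a) := hsmall δ hδ0.le
        have hint2 : IntervalIntegrable (fun v => K*(1-a)*δ * v^(l+a-2)) volume δ s := by
          apply IntervalIntegrable.const_mul
          exact intervalIntegral.intervalIntegrable_rpow
            (Or.inr (notMem_uIcc_of_lt hδ0 (lt_trans hδ0 hcase)))
        have hpc2 : (∫ v in δ..s, G v) ≤ K*(1-a)/(1-(l+a)) * δ^(l+a) := by
          have hmono2 : (∫ v in δ..s, G v) ≤ ∫ v in δ..s, K*(1-a)*δ * v^(l+a-2) := by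
            apply intervalIntegral.integral_mono_on hcase.le (hGint δ s) hint2
            rintro v ⟨hvδ, hvs⟩
            have hv0 : 0 < v := lt_of_lt_of_le hδ0 hvδ
            have hm := aux_mvt ha0 ha1' hv0 hδ0.le
            have h3 : v^l * (v^(a-1) - (v+δ)^(a-1)) ≤ v^l * ((1-a)*δ*v^(a-2)) :=
              mul_le_mul_of_nonneg_left hm (Real.rpow_nonneg hv0.le _)
            have h4 : v^l * v^(a-2) = v^(l+a-2) := by
              rw [← Real.rpow_add hv0]
              congr 1
              ring
            calc K * (v^l * (v^(a-1) - (v+δ)^(a-1)))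
                ≤ K * (v^l * ((1-a)*δ*v^(a-2))) := mul_le_mul_of_nonneg_left h3 hK
              _ = K*(1-a)*δ * v^(l+a-2) := by rw [← h4]; ring
          have hδe : δ * δ^(l+a-1) = δ^(l+a) := by
            nth_rewrite 1 [← Real.rpow_one δ]
            rw [← Real.rpow_add hδ0]
            congr 1
            ring
          have hsp : (0:ℝ) ≤ s^(l+a-1) := Real.rpow_nonneg (by linarith) _
          have hδp : (0:ℝ) < δ^(l+a-1) := Real.rpow_pos_of_pos hδ0 _
          have hval2 : (∫ v in δ..s, K*(1-a)*δ * v^(l+a-2))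
              ≤ K*(1-a)/(1-(l+a)) * δ^(l+a) := by
            rw [intervalIntegral.integral_const_mul,
              integral_rpow (Or.inr ⟨show l+a-2 ≠ -1 by intro hc; linarith,
                notMem_uIcc_of_lt hδ0 (lt_trans hδ0 hcase)⟩)]
            have hee : l+a-2+1 = l+a-1 := by ring
            rw [hee]
            have key2 : (s^(l+a-1) - δ^(l+a-1))/(l+a-1) ≤ δ^(l+a-1)/(1-(l+a)) := by
              have h5 : (s^(l+a-1) - δ^(l+a-1))/(l+a-1)
                  = (δ^(l+a-1) - s^(l+a-1))/(1-(l+a)) := by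
                rw [div_eq_div_iff (show l+a-1 ≠ 0 by intro hc; linarith)
                  (show 1-(l+a) ≠ 0 by intro hc; linarith)]
                ring
              rw [h5]
              gcongr <;> linarith
            have hKnn : (0:ℝ) ≤ K*(1-a)*δ := mul_nonneg (mul_nonneg hK (by linarith)) hδ0.le
            calc K*(1-a)*δ * ((s^(l+a-1) - δ^(l+a-1))/(l+a-1))
                ≤ K*(1-a)*δ * (δ^(l+a-1)/(1-(l+a))) :=
                  mul_le_mul_of_nonneg_left key2 hKnn
              _ = K*(1-a)/(1-(l+a)) * δ^(l+a) := by
                  rw [← hδe]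
                  field_simp
          linarith
        rw [hsplit2]
        have hc3 : K * δ^(l+a)/(l+a) ≤ 2*K/(l+a) * δ^(l+a) := by
          have : K * δ^(l+a)/(l+a) = K/(l+a) * δ^(l+a) := by ring
          rw [this]
          apply mul_le_mul_of_nonneg_right _ hδla
          gcongr
          linarith
        linarith
    have hTB : |TB| ≤ (2*K/(l+a) + K*(1-a)/(1-(l+a))) * δ^(l+a) := by
      calc |TB| ≤ ∫ u in (0:ℝ)..s, G (s - u) := hTB1
        _ = ∫ v in (0:ℝ)..s, G v := hsub
        _ ≤ _ := hQ
    have hfinal : |ψ t - ψ s| ≤ (1/Γa) * M0 * δ^(l+a) := by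
      rw [hrep, abs_mul, abs_of_nonneg (by positivity : (0:ℝ) ≤ 1/Γa)]
      have habc : |TA + TB + TC| ≤ |TA| + |TB| + |TC| :=
        (abs_add_le _ _).trans (add_le_add_left (abs_add_le _ _) _)
      have hsum : |TA + TB + TC| ≤ M0 * δ^(l+a) := by
        rw [hM0def]
        have hexp : (K * (2 / a + 1) + (2 * K / (l + a) + K * (1 - a) / (1 - (l + a))) + K / a) * δ^(l+a)
            = K*(2/a+1) * δ^(l+a) + (2*K/(l+a) + K*(1-a)/(1-(l+a))) * δ^(l+a) + K/a * δ^(l+a) := by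
          ring
        rw [hexp]
        linarith
      calc (1/Γa) * |TA + TB + TC| ≤ (1/Γa) * (M0 * δ^(l+a)) :=
            mul_le_mul_of_nonneg_left hsum (by positivity)
        _ = (1/Γa) * M0 * δ^(l+a) := by ring
    exact hfinal
  refine ⟨(K+1)/(a*Γa), div_pos (by linarith) (mul_pos ha0 hΓ), ψ,
    ⟨(1/Γa)*M0, ?_⟩, hbound, heq⟩
  intro t ht s hs
  rcases le_total s t with h | h
  · rw [abs_of_nonneg (sub_nonneg.mpr h)]
    exact key s t hs ht h
  · rw [abs_sub_comm (ψ t) (ψ s), abs_of_nonpos (by linarith : t - s ≤ 0), neg_sub]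
    exact key t s ht hs h
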